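/- arXiv:1505.07611 — 4 statements merged into one kernel-verified Lean document; each statement's English description precedes it below -/
import Mathlib

section
/- Under the assumptions of the Petrov-Galerkin characterization, if the discrete problem (find u_H ∈ V_H with a(u_H,w_H)=F(w_H) for all w_H∈W_H) has a unique solution, then this solution equals I_H u, where u is the continuous solution, and satisfies ‖u_H‖_V ≤ ‖I_H‖_{L(V)} α⁻¹ ‖F‖_{V'}. -/
/-!
By uniqueness it suffices to check that `I_H u` solves the discrete problem: for a test function
`w_H ∈ W_H`, the error `u - I_H u` lies in `ker I_H` because `I_H` is a projection, so
`a (I_H u) w_H = a u w_H = F w_H`. The bound then follows from `‖I_H u‖ ≤ ‖I_H‖ ‖u‖` and the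
inf-sup stability `α ‖u‖ ≤ ‖a u‖ = ‖F‖` of the continuous problem.
-/

section PetrovGalerkin

variable {𝕜 E G : Type*} [NontriviallyNormedField 𝕜]
  [NormedAddCommGroup E] [NormedSpace 𝕜 E] [NormedAddCommGroup G] [NormedSpace 𝕜 G]
  {σ : 𝕜 →+* 𝕜}

def petrovGalerkinTestSpace (a : E →L[𝕜] G →SL[σ] 𝕜) (IH : E →L[𝕜] E) : Set G :=
  {w | ∀ z, IH z = 0 → a z w = 0}

def IsPetrovGalerkinSolution (a : E →L[𝕜] G →SL[σ] 𝕜) (F : G →SL[σ] 𝕜) (IH : E →L[𝕜] E)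
    (uH : E) : Prop :=
  uH ∈ Set.range IH ∧ ∀ wH ∈ petrovGalerkinTestSpace a IH, a uH wH = F wH

theorem isPetrovGalerkinSolution_projection {a : E →L[𝕜] G →SL[σ] 𝕜} {F : G →SL[σ] 𝕜}
    {IH : E →L[𝕜] E} (hproj : ∀ v, IH (IH v) = IH v) {u : E} (hu : a u = F) :
    IsPetrovGalerkinSolution a F IH (IH u) := by
  refine ⟨⟨u, rfl⟩, fun wH hwH => ?_⟩
  have herr : IH (u - IH u) = 0 := by rw [map_sub, hproj, sub_self]
  have h := hwH _ herr
  rw [map_sub, sub_apply, sub_eq_zero] at h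
  rw [← h, hu]

end PetrovGalerkin

theorem ContinuousLinearMap.iSup_norm_div_norm_le_opNorm {𝕜 𝕜₂ E F : Type*}
    [NontriviallyNormedField 𝕜] [NontriviallyNormedField 𝕜₂]
    [SeminormedAddCommGroup E] [NormedSpace 𝕜 E] [SeminormedAddCommGroup F] [NormedSpace 𝕜₂ F]
    {σ : 𝕜 →+* 𝕜₂} [RingHomIsometric σ] (f : E →SL[σ] F) :
    ⨆ w : {w : E // w ≠ 0}, ‖f w‖ / ‖(w : E)‖ ≤ ‖f‖ :=
  Real.iSup_le (fun w => div_le_of_le_mul₀ (norm_nonneg _) (norm_nonneg f) (f.le_opNorm w))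
    (norm_nonneg f)

theorem stmt2_general {V : Type*} [NormedAddCommGroup V] [InnerProductSpace ℂ V]
    (a : V →L[ℂ] V →SL[starRingEnd ℂ] ℂ) (α : ℝ) (hα : 0 < α)
    (hinfsup : ∀ v : V, α * ‖v‖ ≤ ⨆ w : {w : V // w ≠ 0}, ‖a v w‖ / ‖(w : V)‖)
    (F : V →SL[starRingEnd ℂ] ℂ)
    (IH : V →L[ℂ] V) (hproj : ∀ v : V, IH (IH v) = IH v)
    (u : V) (hu : ∀ v : V, a u v = F v)
    (huniq : ∃! uH : V, uH ∈ Set.range IH ∧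
      ∀ wH : V, (∀ z : V, IH z = 0 → a z wH = 0) → a uH wH = F wH) :
    ∀ uH : V, uH ∈ Set.range IH →
      (∀ wH : V, (∀ z : V, IH z = 0 → a z wH = 0) → a uH wH = F wH) →
      uH = IH u ∧ ‖uH‖ ≤ ‖IH‖ * α⁻¹ * ‖F‖ := by
  intro uH huH_range huH_sol
  have hau : a u = F := ContinuousLinearMap.ext hu
  have huH : uH = IH u :=
    huniq.unique (y₁ := uH) ⟨huH_range, huH_sol⟩ (isPetrovGalerkinSolution_projection hproj hau)
  have hstab : α * ‖u‖ ≤ ‖F‖ :=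
    (hinfsup u).trans (hau ▸ (a u).iSup_norm_div_norm_le_opNorm)
  refine ⟨huH, ?_⟩
  calc ‖uH‖ = ‖IH u‖ := by rw [huH]
    _ ≤ ‖IH‖ * ‖u‖ := IH.le_opNorm u
    _ ≤ ‖IH‖ * (α⁻¹ * ‖F‖) := by
        gcongr
        rwa [inv_mul_eq_div, le_div_iff₀' hα]
    _ = ‖IH‖ * α⁻¹ * ‖F‖ := (mul_assoc _ _ _).symm

/-- If the discrete Petrov-Galerkin problem (trial space `V_H = range I_H`,
test space `W_H`) has a unique solution, then this solution equals `I_H u`, where `u` is the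
continuous solution, and `‖u_H‖ ≤ ‖I_H‖ α⁻¹ ‖F‖`. -/
theorem stmt2 {V : Type*} [NormedAddCommGroup V] [InnerProductSpace ℂ V] [CompleteSpace V]
    (a : V →L[ℂ] V →SL[starRingEnd ℂ] ℂ) (Ca α : ℝ) (hα : 0 < α)
    (hbound : ∀ v w : V, ‖a v w‖ ≤ Ca * ‖v‖ * ‖w‖)
    (hinfsup : ∀ v : V, α * ‖v‖ ≤ ⨆ w : {w : V // w ≠ 0}, ‖a v w‖ / ‖(w : V)‖)
    (hinfsup' : ∀ w : V, w ≠ 0 → ∃ v : V, a v w ≠ 0)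
    (F : V →SL[starRingEnd ℂ] ℂ)
    (IH : V →L[ℂ] V) (hproj : ∀ v : V, IH (IH v) = IH v)
    (u : V) (hu : ∀ v : V, a u v = F v)
    (huniq : ∃! uH : V, uH ∈ Set.range IH ∧
      ∀ wH : V, (∀ z : V, IH z = 0 → a z wH = 0) → a uH wH = F wH) :
    ∀ uH : V, uH ∈ Set.range IH →
      (∀ wH : V, (∀ z : V, IH z = 0 → a z wH = 0) → a uH wH = F wH) →
      uH = IH u ∧ ‖uH‖ ≤ ‖IH‖ * α⁻¹ * ‖F‖ :=
  stmt2_general a α hα hinfsup F IH hproj u hu huniq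
end

section
/- Let I_H : V → V_H ⊂ V be a bounded linear projection with I_H ≠ 0 and I_H ≠ id. Then the Petrov-Galerkin solution u_H = I_H u satisfies the quasi-optimality estimate ‖u − u_H‖_V ≤ ‖I_H‖_{L(V)} · inf_{v_H ∈ V_H} ‖u − v_H‖_V. -/
/-!
Let `p` be the orthogonal projection of `u` onto `range P` and `w = u - p`. Since `P p = p`,
`u - P u = w - P w`, and `w ⊥ P w`, so `‖u - P u‖² = ‖w‖² + ‖P w‖²`, while `‖w‖` is the distance
from `u` to `range P`. Applying `‖P z‖ ≤ ‖P‖ ‖z‖` to `z = ‖w‖² P w + ‖P w‖² w`, which `P` maps to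
`(‖w‖² + ‖P w‖²) P w`, gives `‖w‖² + ‖P w‖² ≤ ‖P‖² ‖w‖²`; this is the inequality behind
Kato's identity `‖P‖ = ‖1 - P‖`.
-/

open scoped InnerProductSpace

theorem IsIdempotentElem.one_le_norm {R : Type*} [NonUnitalNormedRing R] {p : R}
    (hp : IsIdempotentElem p) (hp0 : p ≠ 0) : 1 ≤ ‖p‖ := by
  have hpos : 0 < ‖p‖ := norm_pos_iff.mpr hp0
  have : ‖p‖ ≤ ‖p‖ * ‖p‖ := calc
    ‖p‖ = ‖p * p‖ := by rw [hp.eq]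
    _ ≤ ‖p‖ * ‖p‖ := norm_mul_le p p
  nlinarith

namespace ContinuousLinearMap

variable {𝕜 E : Type*} [RCLike 𝕜] [NormedAddCommGroup E] [InnerProductSpace 𝕜 E]

theorem norm_sq_add_norm_apply_sq_le {P : E →L[𝕜] E} (hP : IsIdempotentElem P) (hP0 : P ≠ 0)
    {w : E} (hw : ⟪P w, w⟫_𝕜 = 0) : ‖w‖ ^ 2 + ‖P w‖ ^ 2 ≤ ‖P‖ ^ 2 * ‖w‖ ^ 2 := by
  rcases (norm_nonneg (P w)).eq_or_lt with hPw | hPw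
  · have := hP.one_le_norm hP0
    rw [← hPw]
    nlinarith [mul_le_mul_of_nonneg_right (one_le_pow₀ this : 1 ≤ ‖P‖ ^ 2) (sq_nonneg ‖w‖)]
  set z : E := ((‖w‖ ^ 2 : ℝ) : 𝕜) • P w + ((‖P w‖ ^ 2 : ℝ) : 𝕜) • w
  have hPz : P z = ((‖P w‖ ^ 2 + ‖w‖ ^ 2 : ℝ) : 𝕜) • P w := by
    have hPPw : P (P w) = P w := congr($(hP.eq) w)
    simp only [z, map_add, map_smul, hPPw]
    push_cast
    rw [add_smul, add_comm]
  have hz : ‖z‖ ^ 2 = ‖P w‖ ^ 2 * ‖w‖ ^ 2 * (‖P w‖ ^ 2 + ‖w‖ ^ 2) := by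
    rw [sq, norm_add_sq_eq_norm_sq_add_norm_sq_of_inner_eq_zero _ _
      (by rw [inner_smul_left, inner_smul_right, hw]; simp)]
    simp only [norm_smul, RCLike.norm_ofReal, abs_sq]
    ring
  have hbound : ‖P z‖ ^ 2 ≤ ‖P‖ ^ 2 * ‖z‖ ^ 2 := by
    rw [← mul_pow]
    exact pow_le_pow_left₀ (norm_nonneg _) (P.le_opNorm z) 2
  rw [hPz, hz, norm_smul, RCLike.norm_ofReal, abs_of_nonneg (by positivity)] at hbound
  have hpos : 0 < ‖P w‖ ^ 2 * (‖P w‖ ^ 2 + ‖w‖ ^ 2) := by positivity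
  nlinarith

theorem norm_sub_apply_le_of_inner_eq_zero {P : E →L[𝕜] E} (hP : IsIdempotentElem P)
    (hP0 : P ≠ 0) {w : E} (hw : ⟪w, P w⟫_𝕜 = 0) : ‖w - P w‖ ≤ ‖P‖ * ‖w‖ := by
  refine pow_le_pow_iff_left₀ (norm_nonneg _) (by positivity) two_ne_zero |>.mp ?_
  rw [mul_pow, @norm_sub_sq 𝕜, hw, map_zero, mul_zero, sub_zero]
  exact norm_sq_add_norm_apply_sq_le hP hP0 (inner_eq_zero_symm.mp hw)

theorem norm_sub_apply_le_opNorm_mul_iInf [CompleteSpace E] {P : E →L[𝕜] E}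
    (hP : IsIdempotentElem P) (hP0 : P ≠ 0) (u : E) :
    ‖u - P u‖ ≤ ‖P‖ * ⨅ v : P.range, ‖u - v‖ := by
  have : CompleteSpace P.range := (IsIdempotentElem.isClosed_range hP).completeSpace_coe
  set p := P.range.starProjection u
  have hPp : P p = p :=
    (LinearMap.IsIdempotentElem.mem_range_iff (IsIdempotentElem.toLinearMap hP)).mp
      (P.range.starProjection_apply_mem u)
  have hsplit : u - P u = (u - p) - P (u - p) := by rw [map_sub, hPp]; abel
  rw [hsplit, ← Submodule.starProjection_minimal]
  exact norm_sub_apply_le_of_inner_eq_zero hP hP0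
    (P.range.starProjection_inner_eq_zero u _ (LinearMap.mem_range_self _ _))

end ContinuousLinearMap

theorem stmt3_general {V : Type*} [NormedAddCommGroup V] [InnerProductSpace ℂ V] [CompleteSpace V]
    (IH : V →L[ℂ] V) (hproj : ∀ v : V, IH (IH v) = IH v)
    (hne0 : IH ≠ 0) (u : V) :
    ‖u - IH u‖ ≤ ‖IH‖ * ⨅ vH : Set.range IH, ‖u - (vH : V)‖ :=
  IH.norm_sub_apply_le_opNorm_mul_iInf (ContinuousLinearMap.ext hproj) hne0 u

/-- Quasi-optimality of the Petrov-Galerkin solution `u_H = I_H u`: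
`‖u − I_H u‖ ≤ ‖I_H‖ · inf_{v_H ∈ V_H} ‖u − v_H‖`, for a bounded nontrivial projection
`I_H` onto `V_H = range I_H`. -/
theorem stmt3 {V : Type*} [NormedAddCommGroup V] [InnerProductSpace ℂ V] [CompleteSpace V]
    (IH : V →L[ℂ] V) (hproj : ∀ v : V, IH (IH v) = IH v)
    (hne0 : IH ≠ 0) (hneid : IH ≠ ContinuousLinearMap.id ℂ V) (u : V) :
    ‖u - IH u‖ ≤ ‖IH‖ * ⨅ vH : Set.range IH, ‖u - (vH : V)‖ :=
  stmt3_general IH hproj hne0 u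
end

section
/- If a is a Hermitian sesquilinear form (a(v,w) = conj(a(w,v))), then the Petrov-Galerkin system matrix is Hermitian: for all u_H, v_H ∈ V_H, a(u_H, T v_H) = conj(a(v_H, T u_H)), where T = 1 + C is the trial-to-test operator. -/
/-!
Since `T v = v + C v` is `a`-orthogonal to `Ker I_H` and `C u ∈ Ker I_H`, we get
`a(u, T v) = a(T u, T v)`; the right-hand side is Hermitian in `(u, v)` when `a` is.
-/

section FineScaleCorrection

variable {𝕜 E : Type*} [RCLike 𝕜] [NormedAddCommGroup E] [NormedSpace 𝕜 E]
  {a : E →L[𝕜] E →L⋆[𝕜] 𝕜} {IH C : E →L[𝕜] E}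

lemma apply_add_correction_of_map_eq_zero (hC : ∀ v z : E, IH z = 0 → a z (C v) = - a z v)
    {z : E} (hz : IH z = 0) (v : E) : a z (v + C v) = 0 := by
  rw [map_add, hC v z hz, add_neg_cancel]

lemma apply_add_correction_eq (hCker : ∀ v : E, IH (C v) = 0)
    (hC : ∀ v z : E, IH z = 0 → a z (C v) = - a z v) (u v : E) :
    a u (v + C v) = a (u + C u) (v + C v) := by
  rw [map_add a, add_apply,
    apply_add_correction_of_map_eq_zero hC (hCker u), add_zero]

end FineScaleCorrection

theorem stmt8_general {V : Type*} [NormedAddCommGroup V] [InnerProductSpace ℂ V]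
    (a : V →L[ℂ] V →SL[starRingEnd ℂ] ℂ) (IH : V →L[ℂ] V)
    (hherm : ∀ v w : V, a v w = starRingEnd ℂ (a w v))
    (C : V →L[ℂ] V)
    (hCker : ∀ v : V, IH (C v) = 0)
    (hC : ∀ v z : V, IH z = 0 → a z (C v) = - a z v) :
    ∀ uH ∈ Set.range IH, ∀ vH ∈ Set.range IH,
      a uH (vH + C vH) = starRingEnd ℂ (a vH (uH + C uH)) := by
  intro uH _ vH _
  rw [apply_add_correction_eq hCker hC uH vH, apply_add_correction_eq hCker hC vH uH, hherm]

/-- If `a` is Hermitian, then the Petrov-Galerkin system matrix is Hermitian: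
`a(u_H, Tv_H) = conj (a(v_H, Tu_H))` for all `u_H, v_H ∈ V_H`, where `T = 1 + C`. -/
theorem stmt8 {V : Type*} [NormedAddCommGroup V] [InnerProductSpace ℂ V] [CompleteSpace V]
    (a : V →L[ℂ] V →SL[starRingEnd ℂ] ℂ) (IH : V →L[ℂ] V)
    (hproj : ∀ v : V, IH (IH v) = IH v)
    (hherm : ∀ v w : V, a v w = starRingEnd ℂ (a w v))
    (C : V →L[ℂ] V)
    (hCker : ∀ v : V, IH (C v) = 0)
    (hC : ∀ v z : V, IH z = 0 → a z (C v) = - a z v) :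
    ∀ uH ∈ Set.range IH, ∀ vH ∈ Set.range IH,
      a uH (vH + C vH) = starRingEnd ℂ (a vH (uH + C uH)) :=
  stmt8_general a IH hherm C hCker hC
end

section
/- If the discrete inf-sup condition for the Petrov-Galerkin pair (V_H, W_H) holds (equivalently dim W_H = dim V_H < ∞ together with well-posedness), then the discrete inf-sup constant is bounded below by α/‖I_H‖_{L(V)}: inf over nonzero v_H∈V_H of sup over nonzero w_H∈W_H of |a(v_H,w_H)|/(‖v_H‖‖w_H‖) ≥ α/‖I_H‖_{L(V)}. -/
/-!
Let `A` be the Riesz operator of `a`, `⟪A w, v⟫ = a v w` (written `a.flip♯` below). The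
continuous inf-sup condition says `α ‖v‖ ≤ ‖A† v‖`. A bounded-below operator whose adjoint is
injective is onto, and then its adjoint is bounded below by the same constant; applied to `A†`
this gives `α ‖w‖ ≤ ‖A w‖`.

For `w ∈ W_H` the vector `A w` is orthogonal to `ker I_H ∋ A w - I_H A w`, so with `Π` the
orthogonal projection onto `V_H`, `‖A w‖² = ⟪I_H A w, Π A w⟫ ≤ ‖I_H‖ ‖A w‖ ‖Π A w‖`. Hence the compression
`T = Π A : W_H → V_H` is bounded below by `α / ‖I_H‖`. Uniqueness of discrete solutions makes
`T†` injective, so by the same principle `‖T† v_H‖ ≥ α / ‖I_H‖ * ‖v_H‖`, and the discrete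
inf-sup quotient at `v_H` is attained at `w_H = T† v_H`, where it equals `‖T† v_H‖`.
-/

open ContinuousLinearMap InnerProductSpace
open scoped InnerProductSpace

section

variable {𝕜 E F V : Type*} [RCLike 𝕜]
  [NormedAddCommGroup E] [InnerProductSpace 𝕜 E] [CompleteSpace E]
  [NormedAddCommGroup F] [InnerProductSpace 𝕜 F] [CompleteSpace F]
  [NormedAddCommGroup V] [InnerProductSpace 𝕜 V]

namespace ContinuousLinearMap

theorem range_eq_top_of_injective_adjoint (T : E →L[𝕜] F) {c : ℝ} (hc : 0 < c)
    (hT : ∀ x, c * ‖x‖ ≤ ‖T x‖) (hinj : Function.Injective T.adjoint) : T.range = ⊤ := by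
  have hanti : AntilipschitzWith ⟨c⁻¹, inv_nonneg.2 hc.le⟩ T :=
    T.antilipschitz_of_bound fun x => by
      show ‖x‖ ≤ c⁻¹ * ‖T x‖
      rw [inv_mul_eq_div, le_div_iff₀ hc, mul_comm]
      exact hT x
  have : CompleteSpace T.range :=
    (hanti.isClosed_range T.uniformContinuous).completeSpace_coe
  rw [← Submodule.orthogonal_eq_bot_iff, orthogonal_range, LinearMap.ker_eq_bot.2 hinj]

theorem mul_norm_le_norm_adjoint (T : E →L[𝕜] F) {c : ℝ} (hc : 0 < c)
    (hT : ∀ x, c * ‖x‖ ≤ ‖T x‖) (hinj : Function.Injective T.adjoint) (y : F) :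
    c * ‖y‖ ≤ ‖T.adjoint y‖ := by
  obtain ⟨x, rfl⟩ : ∃ x, T x = y :=
    LinearMap.range_eq_top.1 (T.range_eq_top_of_injective_adjoint hc hT hinj) y
  rcases eq_or_ne (T x) 0 with h0 | hne
  · simp [h0]
  have hsq : ‖T x‖ * ‖T x‖ ≤ ‖x‖ * ‖T.adjoint (T x)‖ := by
    calc ‖T x‖ * ‖T x‖ = ‖⟪x, T.adjoint (T x)⟫_𝕜‖ := by
          simp [adjoint_inner_right, sq]
      _ ≤ ‖x‖ * ‖T.adjoint (T x)‖ := norm_inner_le_norm _ _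
  have := hT x
  refine le_of_mul_le_mul_right ?_ (norm_pos_iff.2 hne)
  nlinarith [norm_nonneg (T.adjoint (T x))]

end ContinuousLinearMap

theorem norm_le_opNorm_mul_norm_starProjection_range {P : V →L[𝕜] V} (hP : IsIdempotentElem P)
    [P.range.HasOrthogonalProjection] {v : V} (hv : v ∈ P.kerᗮ) :
    ‖v‖ ≤ ‖P‖ * ‖P.range.starProjection v‖ := by
  set p := P.range.starProjection v
  have hker : v - P v ∈ P.ker := by
    change P (v - P v) = 0
    rw [map_sub, show P (P v) = P v from DFunLike.congr_fun hP.eq v, sub_self]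
  have hvv : ⟪v, v⟫_𝕜 = ⟪P v, v⟫_𝕜 := by
    rw [← sub_eq_zero, ← inner_sub_left]
    exact hv _ hker
  have hsq : ‖v‖ * ‖v‖ ≤ ‖v‖ * (‖P‖ * ‖p‖) :=
    calc ‖v‖ * ‖v‖ = ‖⟪P v, v⟫_𝕜‖ := by
          rw [← hvv]
          simp [sq]
      _ = ‖⟪P v, p⟫_𝕜‖ := by
          have hPv : P.range.starProjection (P v) = P v :=
            Submodule.starProjection_eq_self_iff.2 ⟨v, rfl⟩
          rw [← Submodule.inner_starProjection_left_eq_right, hPv]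
      _ ≤ ‖P v‖ * ‖p‖ := norm_inner_le_norm _ _
      _ ≤ ‖P‖ * ‖v‖ * ‖p‖ := by gcongr; exact P.le_opNorm v
      _ = ‖v‖ * (‖P‖ * ‖p‖) := by ring
  rcases (norm_nonneg v).eq_or_lt with h0 | hpos
  · rw [← h0]; positivity
  · exact le_of_mul_le_mul_left hsq hpos

local postfix:1024 "♯" => continuousLinearMapOfBilin

section Sesquilinear

variable [CompleteSpace V] (a : V →L[𝕜] V →L⋆[𝕜] 𝕜)

theorem inner_flip_sharp_apply (v w : V) : ⟪a.flip♯ w, v⟫_𝕜 = a v w :=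
  continuousLinearMapOfBilin_apply a.flip w v

theorem inner_adjoint_flip_sharp_apply (v w : V) : ⟪w, (a.flip♯).adjoint v⟫_𝕜 = a v w := by
  rw [adjoint_inner_right, inner_flip_sharp_apply]

theorem iSup_div_le_norm_adjoint_flip_sharp (v : V) :
    ⨆ w : {w : V // w ≠ 0}, ‖a v w‖ / ‖(w : V)‖ ≤ ‖(a.flip♯).adjoint v‖ :=
  Real.iSup_le (fun w => by
    rw [div_le_iff₀ (norm_pos_iff.2 w.2), ← inner_adjoint_flip_sharp_apply, mul_comm]
    exact norm_inner_le_norm _ _) (norm_nonneg _)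

theorem mul_norm_le_norm_flip_sharp {α : ℝ} (hα : 0 < α)
    (hinfsup : ∀ v : V, α * ‖v‖ ≤ ⨆ w : {w : V // w ≠ 0}, ‖a v w‖ / ‖(w : V)‖)
    (hnondeg : ∀ w : V, w ≠ 0 → ∃ v : V, a v w ≠ 0) (w : V) :
    α * ‖w‖ ≤ ‖a.flip♯ w‖ := by
  have hinj : Function.Injective ((a.flip♯).adjoint.adjoint) := by
    rw [adjoint_adjoint, injective_iff_map_eq_zero]
    intro u hu
    by_contra hne
    obtain ⟨v, hv⟩ := hnondeg u hne
    exact hv (by rw [← inner_flip_sharp_apply, hu, inner_zero_left])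
  simpa only [adjoint_adjoint] using (a.flip♯).adjoint.mul_norm_le_norm_adjoint hα
    (fun v => (hinfsup v).trans (iSup_div_le_norm_adjoint_flip_sharp a v)) hinj w

variable (P : V →L[𝕜] V)

/-- `W_H`, written as `A⁻¹ (ker P)ᗮ` so that it is visibly closed. -/
noncomputable def testSpace : Submodule 𝕜 V := P.kerᗮ.comap (a.flip♯ : V →ₗ[𝕜] V)

theorem mem_testSpace {w : V} : w ∈ testSpace a P ↔ ∀ z, P z = 0 → a z w = 0 := by
  simp only [testSpace, Submodule.mem_comap, Submodule.mem_orthogonal, LinearMap.mem_ker, coe_coe]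
  refine forall_congr' fun z => imp_congr_right fun _ => ?_
  rw [inner_eq_zero_symm, inner_flip_sharp_apply]

instance : CompleteSpace (testSpace a P) :=
  ((Submodule.isClosed_orthogonal P.ker).preimage (a.flip♯).continuous).completeSpace_coe

variable [CompleteSpace P.range]

noncomputable def petrovGalerkinOp : testSpace a P →L[𝕜] P.range :=
  P.range.orthogonalProjectionOnto ∘L a.flip♯ ∘L (testSpace a P).subtypeL

theorem inner_petrovGalerkinOp (x : testSpace a P) (y : P.range) :
    ⟪petrovGalerkinOp a P x, y⟫_𝕜 = a y x := by
  rw [petrovGalerkinOp, comp_apply, comp_apply,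
    Submodule.inner_orthogonalProjectionOnto_eq_of_mem_right, Submodule.subtypeL_apply,
    inner_flip_sharp_apply]

theorem mul_norm_le_norm_petrovGalerkinOp (hP : IsIdempotentElem P) {α : ℝ}
    (hA : ∀ w, α * ‖w‖ ≤ ‖a.flip♯ w‖) (x : testSpace a P) :
    α * ‖x‖ ≤ ‖P‖ * ‖petrovGalerkinOp a P x‖ :=
  (hA x).trans (norm_le_opNorm_mul_norm_starProjection_range hP x.2)

theorem injective_adjoint_petrovGalerkinOp
    (hnondeg : ∀ y ∈ P.range, (∀ w ∈ testSpace a P, a y w = 0) → y = 0) :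
    Function.Injective (petrovGalerkinOp a P).adjoint := by
  rw [injective_iff_map_eq_zero]
  intro y hy
  refine Subtype.ext (hnondeg y y.2 fun w hw => ?_)
  rw [← inner_petrovGalerkinOp a P ⟨w, hw⟩, ← adjoint_inner_right, hy, inner_zero_right]

theorem norm_adjoint_petrovGalerkinOp_le_iSup (y : P.range) :
    ‖(petrovGalerkinOp a P).adjoint y‖ ≤
      ⨆ w : {w : V // (∀ z, P z = 0 → a z w = 0) ∧ w ≠ 0}, ‖a y w‖ / ‖(w : V)‖ := by
  set z := (petrovGalerkinOp a P).adjoint y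
  rcases eq_or_ne z 0 with hz | hz
  · rw [hz, norm_zero]
    exact Real.iSup_nonneg fun _ => by positivity
  have hbdd : BddAbove (Set.range fun w : {w : V // (∀ z, P z = 0 → a z w = 0) ∧ w ≠ 0} =>
      ‖a y w‖ / ‖(w : V)‖) := by
    refine ⟨‖a y‖, ?_⟩
    rintro _ ⟨w, rfl⟩
    exact div_le_of_le_mul₀ (norm_nonneg _) (norm_nonneg _) ((a y).le_opNorm w)
  refine le_ciSup_of_le hbdd ⟨z, (mem_testSpace a P).1 z.2, by simpa using hz⟩ ?_
  have hyz : a y z = ⟪z, z⟫_𝕜 := by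
    rw [← inner_petrovGalerkinOp, ← adjoint_inner_right]
  simp [hyz, sq]

end Sesquilinear

end

theorem stmt9_general {V : Type*} [NormedAddCommGroup V] [InnerProductSpace ℂ V] [CompleteSpace V]
    (a : V →L[ℂ] V →SL[starRingEnd ℂ] ℂ) (α : ℝ) (hα : 0 < α)
    (hinfsup : ∀ v : V, α * ‖v‖ ≤ ⨆ w : {w : V // w ≠ 0}, ‖a v w‖ / ‖(w : V)‖)
    (hinfsup' : ∀ w : V, w ≠ 0 → ∃ v : V, a v w ≠ 0)
    (IH : V →L[ℂ] V) (hproj : ∀ v : V, IH (IH v) = IH v)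
    (hwell : ∀ F : V →SL[starRingEnd ℂ] ℂ, ∃! uH : V, uH ∈ Set.range IH ∧
      ∀ wH : V, (∀ z : V, IH z = 0 → a z wH = 0) → a uH wH = F wH) :
    ∀ vH ∈ Set.range IH, α / ‖IH‖ * ‖vH‖ ≤
      ⨆ w : {w : V // (∀ z : V, IH z = 0 → a z w = 0) ∧ w ≠ 0}, ‖a vH w‖ / ‖(w : V)‖ := by
  intro vH hvH
  have hP : IsIdempotentElem IH := ContinuousLinearMap.ext hproj
  have : CompleteSpace IH.range := hP.isClosed_range.completeSpace_coe
  rcases (norm_nonneg IH).eq_or_lt with h0 | hpos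
  · rw [← h0, div_zero, zero_mul]
    exact Real.iSup_nonneg fun _ => by positivity
  have hnondeg : ∀ y ∈ IH.range, (∀ w ∈ testSpace a IH, a y w = 0) → y = 0 :=
    fun y hy hy0 => (hwell 0).unique ⟨hy, fun w hw => hy0 w ((mem_testSpace a IH).2 hw)⟩
      ⟨⟨0, map_zero IH⟩, fun _ _ => by simp⟩
  have hT := mul_norm_le_norm_petrovGalerkinOp a IH hP
    (mul_norm_le_norm_flip_sharp a hα hinfsup hinfsup')
  calc α / ‖IH‖ * ‖vH‖ ≤ ‖(petrovGalerkinOp a IH).adjoint ⟨vH, hvH⟩‖ :=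
        (petrovGalerkinOp a IH).mul_norm_le_norm_adjoint (div_pos hα hpos)
          (fun x => by rw [div_mul_eq_mul_div, div_le_iff₀ hpos]; linarith [hT x])
          (injective_adjoint_petrovGalerkinOp a IH hnondeg) ⟨vH, hvH⟩
    _ ≤ _ := norm_adjoint_petrovGalerkinOp_le_iSup a IH _

/-- If the discrete Petrov-Galerkin problem for the pair
`(V_H, W_H)` is uniquely solvable for every right-hand side, then the discrete inf-sup
constant is bounded below by `α/‖I_H‖`. -/
theorem stmt9 {V : Type*} [NormedAddCommGroup V] [InnerProductSpace ℂ V] [CompleteSpace V]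
    (a : V →L[ℂ] V →SL[starRingEnd ℂ] ℂ) (Ca α : ℝ) (hα : 0 < α)
    (hbound : ∀ v w : V, ‖a v w‖ ≤ Ca * ‖v‖ * ‖w‖)
    (hinfsup : ∀ v : V, α * ‖v‖ ≤ ⨆ w : {w : V // w ≠ 0}, ‖a v w‖ / ‖(w : V)‖)
    (hinfsup' : ∀ w : V, w ≠ 0 → ∃ v : V, a v w ≠ 0)
    (IH : V →L[ℂ] V) (hproj : ∀ v : V, IH (IH v) = IH v)
    (hwell : ∀ F : V →SL[starRingEnd ℂ] ℂ, ∃! uH : V, uH ∈ Set.range IH ∧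
      ∀ wH : V, (∀ z : V, IH z = 0 → a z wH = 0) → a uH wH = F wH) :
    ∀ vH ∈ Set.range IH, α / ‖IH‖ * ‖vH‖ ≤
      ⨆ w : {w : V // (∀ z : V, IH z = 0 → a z w = 0) ∧ w ≠ 0}, ‖a vH w‖ / ‖(w : V)‖ :=
  stmt9_general a α hα hinfsup hinfsup' IH hproj hwell
end
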